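/- arXiv:1111.4148 — 4 statements merged into one kernel-verified Lean document; each statement's English description precedes it below -/
import Mathlib

section
/- Let V₁, V₂, ... be i.i.d. Beta(1, λ) random variables and define stick-breaking weights π_h = V_h ∏_{j<h}(1-V_j). Then for any H ≥ 1 and ε ∈ (0,1), P(∑_{h>H} π_h > ε) ≤ ((eλ/H)·log(1/ε))^H. -/
/-!
Put `t = log (1/ε)`. The tail mass after `H` sticks is at most `∏_{j<H} (1 - V_j)`, and
`E[(1 - V)^s] = λ/(λ + s)` for `V ~ Beta(1, λ)`. Markov's inequality for `∏_{j<H} (1 - V_j)^s`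
and independence give `P(tail > ε) ≤ (λ/(λ + s))^H ε^{-s}` for every `s ≥ 0`; the choice
`s = H/t - λ` turns this into `(λt/H)^H e^{H - λt} ≤ (eλt/H)^H`. When `λt ≥ H` there is no such
`s`, but then the bound is at least `1`.
-/

open MeasureTheory Real ProbabilityTheory Finset

noncomputable section

def betaOneDensity (lam v : ℝ) : ℝ :=
  if v ∈ Set.Ioo (0 : ℝ) 1 then lam * (1 - v) ^ (lam - 1) else 0

def betaOneMeasure (lam : ℝ) : Measure ℝ :=
  volume.withDensity fun v => ENNReal.ofReal (betaOneDensity lam v)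

lemma measurable_betaOneDensity (lam : ℝ) : Measurable (betaOneDensity lam) :=
  Measurable.ite measurableSet_Ioo (by fun_prop) measurable_const

lemma integral_one_sub_rpow {a : ℝ} (ha : -1 < a) :
    ∫ x in (0 : ℝ)..1, (1 - x) ^ a = 1 / (a + 1) := by
  rw [intervalIntegral.integral_comp_sub_left (fun x => x ^ a), integral_rpow (Or.inl ha)]
  simp [zero_rpow (by linarith : a + 1 ≠ 0)]

lemma lintegral_one_sub_rpow_betaOneMeasure {lam s : ℝ} (hlam : 0 < lam) (hs : 0 < lam + s) :
    ∫⁻ v, ENNReal.ofReal ((1 - v) ^ s) ∂betaOneMeasure lam = ENNReal.ofReal (lam / (lam + s)) := by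
  set f : ℝ → ℝ := fun v => lam * (1 - v) ^ (lam + s - 1)
  have hf : ∫ v in (0 : ℝ)..1, f v = lam / (lam + s) := by
    rw [intervalIntegral.integral_const_mul, integral_one_sub_rpow (by linarith)]
    ring_nf
  have hf_int : IntegrableOn f (Set.Ioo 0 1) := by
    refine (intervalIntegrable_iff_integrableOn_Ioo_of_le zero_le_one).1 <|
      intervalIntegral.intervalIntegrable_of_integral_ne_zero ?_
    rw [hf]
    positivity
  have hf_nonneg : 0 ≤ᵐ[volume.restrict (Set.Ioo 0 1)] f :=
    (ae_restrict_iff' measurableSet_Ioo).2 <| ae_of_all _ fun v hv =>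
      mul_nonneg hlam.le (rpow_nonneg (sub_nonneg.2 hv.2.le) _)
  have hmul : ((fun v => ENNReal.ofReal (betaOneDensity lam v)) *
      fun v => ENNReal.ofReal ((1 - v) ^ s)) =
      (Set.Ioo 0 1).indicator fun v => ENNReal.ofReal (f v) := by
    funext v
    rw [Pi.mul_apply, betaOneDensity]
    by_cases hv : v ∈ Set.Ioo (0 : ℝ) 1
    · have h1v : 0 < 1 - v := sub_pos.2 hv.2
      rw [if_pos hv, Set.indicator_of_mem hv, ← ENNReal.ofReal_mul (by positivity), mul_assoc,
        ← rpow_add h1v, sub_add_eq_add_sub]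
    · simp [hv]
  rw [betaOneMeasure, lintegral_withDensity_eq_lintegral_mul _
    (measurable_betaOneDensity lam).ennreal_ofReal (by fun_prop), hmul,
    lintegral_indicator measurableSet_Ioo,
    ← ofReal_integral_eq_lintegral_ofReal hf_int hf_nonneg, ← integral_Ioc_eq_integral_Ioo,
    ← intervalIntegral.integral_of_le zero_le_one, hf]

lemma ae_mem_Ioo_betaOneMeasure (lam : ℝ) :
    ∀ᵐ v ∂betaOneMeasure lam, v ∈ Set.Ioo (0 : ℝ) 1 := by
  rw [betaOneMeasure, ae_withDensity_iff (measurable_betaOneDensity lam).ennreal_ofReal]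
  refine ae_of_all _ fun v hv => ?_
  by_contra hmem
  simp [betaOneDensity, hmem] at hv

variable {Ω ι : Type*} [MeasurableSpace Ω] {μ : Measure Ω}

lemma ae_mem_Ioo_of_map_eq_betaOneMeasure {lam : ℝ} {X : Ω → ℝ} (hX : AEMeasurable X μ)
    (hlaw : μ.map X = betaOneMeasure lam) : ∀ᵐ ω ∂μ, X ω ∈ Set.Ioo (0 : ℝ) 1 :=
  ae_of_ae_map hX (hlaw ▸ ae_mem_Ioo_betaOneMeasure lam)

lemma measure_lt_prod_one_sub_le {lam s ε : ℝ} {V : ι → Ω → ℝ} (hlam : 0 < lam) (hs : 0 ≤ s)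
    (hε : 0 < ε) (hVm : ∀ i, Measurable (V i)) (hindep : iIndepFun V μ)
    (hlaw : ∀ i, μ.map (V i) = betaOneMeasure lam) (S : Finset ι) :
    μ {ω | ε < ∏ i ∈ S, (1 - V i ω)} ≤ ENNReal.ofReal ((lam / (lam + s)) ^ S.card / ε ^ s) := by
  set g : ℝ → ENNReal := fun v => ENNReal.ofReal ((1 - v) ^ s)
  have hg : Measurable g := by fun_prop
  have hεs : 0 < ε ^ s := rpow_pos_of_pos hε s
  have hsub : {ω | ε < ∏ i ∈ S, (1 - V i ω)} ≤ᵐ[μ]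
      {ω | ENNReal.ofReal (ε ^ s) ≤ ∏ i ∈ S, g (V i ω)} := by
    have hgood : ∀ᵐ ω ∂μ, ∀ i ∈ S, V i ω ∈ Set.Ioo (0 : ℝ) 1 :=
      (Filter.eventually_all_finset S).2 fun i _ =>
        ae_mem_Ioo_of_map_eq_betaOneMeasure (hVm i).aemeasurable (hlaw i)
    filter_upwards [hgood] with ω hω hlt
    have hnonneg : ∀ i ∈ S, 0 ≤ 1 - V i ω := fun i hi => sub_nonneg.2 (hω i hi).2.le
    calc ENNReal.ofReal (ε ^ s) ≤ ENNReal.ofReal ((∏ i ∈ S, (1 - V i ω)) ^ s) :=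
          ENNReal.ofReal_le_ofReal (rpow_le_rpow hε.le hlt.le hs)
      _ = ∏ i ∈ S, g (V i ω) := by
          rw [← finsetProd_rpow _ _ hnonneg, ENNReal.ofReal_prod_of_nonneg
            fun i hi => rpow_nonneg (hnonneg i hi) s]
  calc μ {ω | ε < ∏ i ∈ S, (1 - V i ω)}
      ≤ μ {ω | ENNReal.ofReal (ε ^ s) ≤ ∏ i ∈ S, g (V i ω)} := measure_mono_ae hsub
    _ ≤ (∫⁻ ω, ∏ i ∈ S, g (V i ω) ∂μ) / ENNReal.ofReal (ε ^ s) :=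
        meas_ge_le_lintegral_div (by fun_prop) (ENNReal.ofReal_pos.2 hεs).ne'
          ENNReal.ofReal_ne_top
    _ = ENNReal.ofReal ((lam / (lam + s)) ^ S.card / ε ^ s) := by
        rw [lintegral_prod_eq_prod_lintegral_of_indepFun S (fun i ω => g (V i ω))
          (hindep.comp (fun _ => g) fun _ => hg) fun i => hg.comp (hVm i)]
        have hfactor : ∀ i, ∫⁻ ω, g (V i ω) ∂μ = ENNReal.ofReal (lam / (lam + s)) := fun i => by
          rw [← lintegral_map hg (hVm i), hlaw i,
            lintegral_one_sub_rpow_betaOneMeasure hlam (by linarith)]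
        simp only [hfactor, prod_const]
        rw [← ENNReal.ofReal_pow (by positivity), ← ENNReal.ofReal_div_of_pos hεs]

lemma sum_range_mul_prod_one_sub {R : Type*} [CommRing R] (v : ℕ → R) (H n : ℕ) :
    ∑ k ∈ range n, v (H + k) * ∏ j ∈ range (H + k), (1 - v j) =
      ∏ j ∈ range H, (1 - v j) - ∏ j ∈ range (H + n), (1 - v j) := by
  induction n with
  | zero => simp
  | succ n ih =>
    rw [sum_range_succ, ih, ← add_assoc, prod_range_succ]
    ring

lemma tsum_mul_prod_one_sub_le {v : ℕ → ℝ} (hv : ∀ j, v j ∈ Set.Icc (0 : ℝ) 1) (H : ℕ) :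
    ∑' k, v (H + k) * ∏ j ∈ range (H + k), (1 - v j) ≤ ∏ j ∈ range H, (1 - v j) := by
  have hprod : ∀ n, 0 ≤ ∏ j ∈ range n, (1 - v j) :=
    fun n => prod_nonneg fun j _ => sub_nonneg.2 (hv j).2
  refine Real.tsum_le_of_sum_range_le (fun k => mul_nonneg (hv _).1 (hprod _)) fun n => ?_
  rw [sum_range_mul_prod_one_sub]
  linarith [hprod (H + n)]

lemma pow_div_exp_rpow_le (H : ℕ) {lam t : ℝ} (hlam : 0 ≤ lam) (ht : 0 < t) :
    (lam / (H / t)) ^ H / exp (-t) ^ (H / t - lam) ≤ (exp 1 * lam / H * t) ^ H := by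
  have hexponent : -t * (H / t - lam) = -(H - lam * t) := by field_simp
  calc (lam / (H / t)) ^ H / exp (-t) ^ (H / t - lam)
      = (lam * t / H) ^ H * exp (H - lam * t) := by
        rw [← exp_mul, hexponent, exp_neg, div_inv_eq_mul, div_div_eq_mul_div]
    _ ≤ (lam * t / H) ^ H * exp H := by gcongr; linarith [mul_nonneg hlam ht.le]
    _ = (exp 1 * lam / H * t) ^ H := by rw [← exp_one_pow, ← mul_pow]; ring_nf

end

/-- Stick-breaking tail mass bound: if `V₀, V₁, …` are i.i.d. `Beta(1, λ)` and
`π_h = V_h ∏_{j<h} (1 - V_j)`, then for any `H ≥ 1` and `ε ∈ (0,1)`,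
`P(∑_{h ≥ H} pw_h > ε) ≤ ((e λ / H) log(1/ε))^H`. -/
theorem stick_breaking_tail_mass
    {Ω : Type} [MeasurableSpace Ω] (μ : Measure Ω) [IsProbabilityMeasure μ]
    (lam : ℝ) (hlam : 0 < lam)
    (V : ℕ → Ω → ℝ) (hVm : ∀ h, Measurable (V h))
    (hindep : iIndepFun V μ)
    (hlaw : ∀ h, μ.map (V h) =
      volume.withDensity (fun v =>
        ENNReal.ofReal (if v ∈ Set.Ioo (0 : ℝ) 1 then lam * (1 - v) ^ (lam - 1) else 0)))
    (pw : ℕ → Ω → ℝ)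
    (hpw : ∀ h ω, pw h ω = V h ω * ∏ j ∈ Finset.range h, (1 - V j ω))
    (H : ℕ) (hH : 1 ≤ H) (ε : ℝ) (hε : ε ∈ Set.Ioo (0 : ℝ) 1) :
    μ {ω | ε < ∑' k : ℕ, pw (H + k) ω} ≤
      ENNReal.ofReal ((Real.exp 1 * lam / H * Real.log (1 / ε)) ^ H) := by
  obtain ⟨hε0, hε1⟩ := hε
  set t := log (1 / ε) with ht
  have ht_pos : 0 < t := log_pos ((one_lt_div hε0).2 hε1)
  have hε_eq : ε = exp (-t) := by rw [ht, one_div, log_inv, neg_neg, exp_log hε0]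
  rcases le_or_gt (H : ℝ) (lam * t) with hbig | hsmall
  · have hHpos : (0 : ℝ) < H := by exact_mod_cast hH
    refine prob_le_one.trans (ENNReal.one_le_ofReal.2 (one_le_pow₀ ?_))
    rw [div_mul_eq_mul_div, one_le_div hHpos, mul_assoc]
    nlinarith [add_one_le_exp 1]
  set s := H / t - lam
  have hs : 0 ≤ s := by rw [sub_nonneg, le_div_iff₀ ht_pos]; linarith
  have htail : ∀ᵐ ω ∂μ, ε < ∑' k, pw (H + k) ω → ε < ∏ j ∈ range H, (1 - V j ω) := by
    filter_upwards [ae_all_iff.2 fun j =>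
      ae_mem_Ioo_of_map_eq_betaOneMeasure (hVm j).aemeasurable (hlaw j)] with ω hω hlt
    simp only [hpw] at hlt
    exact hlt.trans_le (tsum_mul_prod_one_sub_le (fun j => Set.Ioo_subset_Icc_self (hω j)) H)
  calc μ {ω | ε < ∑' k : ℕ, pw (H + k) ω}
      ≤ μ {ω | ε < ∏ j ∈ range H, (1 - V j ω)} := measure_mono_ae htail
    _ ≤ ENNReal.ofReal ((lam / (lam + s)) ^ H / ε ^ s) := by
        simpa using measure_lt_prod_one_sub_le hlam hs hε0 hVm hindep hlaw (range H)
    _ ≤ _ := by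
        rw [add_sub_cancel, hε_eq]
        exact ENNReal.ofReal_le_ofReal (pow_div_exp_rpow_le H hlam.le ht_pos)
end

section
/- For every pair of probability densities p and q, the Kullback-Leibler divergence satisfies ∫ p log(p/q) ≲ h²(p,q)·(1 + log‖p/q‖_∞), where h is the Hellinger distance and ‖p/q‖_∞ is the essential supremum of p/q. -/
open MeasureTheory Real

/-!
Pointwise, with `t = √(p/q)`, one has the identity
`2t² log t - t² + 1 = (3 + 2 log t)(t - 1)² - 2(2t - 1)(t - 1 - log t)`,
so `p log(p/q) - p + q ≤ (3 + log ‖p/q‖_∞)(√p - √q)²` wherever `p ≥ q`; where `p ≤ q`,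
`log t ≤ t - 1` gives the bound `3(√p - √q)²`. Integrating, the terms `-p + q` cancel.
-/

lemma mul_log_sub_add_one_le_of_le_one {x : ℝ} (hx₀ : 0 ≤ x) (hx₁ : x ≤ 1) :
    x * log x - x + 1 ≤ 3 * (√x - 1) ^ 2 := by
  set t := √x
  have ht₀ : 0 ≤ t := sqrt_nonneg x
  have ht₁ : t ≤ 1 := sqrt_le_one.mpr hx₁
  have hx : x = t ^ 2 := (sq_sqrt hx₀).symm
  have hlog : x * log x ≤ 2 * t ^ 2 * (t - 1) := by
    rcases ht₀.eq_or_lt with ht | ht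
    · simp [hx, ← ht]
    · rw [hx, log_pow]
      have := log_le_sub_one_of_pos ht
      push_cast
      nlinarith [sq_nonneg t]
  nlinarith [mul_nonneg (sq_nonneg (t - 1)) (sub_nonneg.mpr ht₁)]

lemma mul_log_sub_add_one_le_of_one_le {x : ℝ} (hx : 1 ≤ x) :
    x * log x - x + 1 ≤ (3 + log x) * (√x - 1) ^ 2 := by
  set t := √x
  have ht : 1 ≤ t := one_le_sqrt.mpr hx
  have hx' : x = t ^ 2 := (sq_sqrt (by linarith)).symm
  have hlog : log t ≤ t - 1 := log_le_sub_one_of_pos (by linarith)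
  have key : x * log x - x + 1 =
      (3 + log x) * (t - 1) ^ 2 - 2 * (2 * t - 1) * (t - 1 - log t) := by
    rw [hx', log_pow]; push_cast; ring
  rw [key]
  nlinarith [mul_nonneg (by linarith : (0 : ℝ) ≤ 2 * t - 1) (sub_nonneg.mpr hlog)]

lemma mul_log_sub_add_one_le {x M : ℝ} (hx : 0 ≤ x) (hxM : x ≤ M) (hM : 1 ≤ M) :
    x * log x - x + 1 ≤ (3 + log M) * (√x - 1) ^ 2 := by
  rcases le_total x 1 with hx₁ | hx₁
  · calc x * log x - x + 1 ≤ 3 * (√x - 1) ^ 2 := mul_log_sub_add_one_le_of_le_one hx hx₁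
      _ ≤ (3 + log M) * (√x - 1) ^ 2 := by
        gcongr; linarith [log_nonneg hM]
  · calc x * log x - x + 1 ≤ (3 + log x) * (√x - 1) ^ 2 := mul_log_sub_add_one_le_of_one_le hx₁
      _ ≤ (3 + log M) * (√x - 1) ^ 2 := by
        gcongr

lemma mul_log_div_sub_add_le {a b M : ℝ} (ha : 0 ≤ a) (hb : 0 ≤ b) (habM : a / b ≤ M)
    (hM : 1 ≤ M) : a * log (a / b) - a + b ≤ (3 + log M) * (√a - √b) ^ 2 := by
  rcases hb.eq_or_lt with hb₀ | hb₀
  · subst hb₀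
    have : 0 ≤ (3 + log M) * (√a - √0) ^ 2 := by
      have := log_nonneg hM
      positivity
    simp only [div_zero, log_zero, mul_zero] at this ⊢
    linarith
  · have ha' : a = b * (a / b) := by field_simp
    have hsqrt : √a - √b = √b * (√(a / b) - 1) := by
      rw [mul_sub, ← sqrt_mul hb, ← ha', mul_one]
    have hscaled := mul_le_mul_of_nonneg_left
      (mul_log_sub_add_one_le (div_nonneg ha hb) habM hM) hb
    calc a * log (a / b) - a + b = b * (a / b * log (a / b) - a / b + 1) := by
          field_simp
      _ ≤ b * ((3 + log M) * (√(a / b) - 1) ^ 2) := hscaled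
      _ = (3 + log M) * (√a - √b) ^ 2 := by
          rw [hsqrt, mul_pow, sq_sqrt hb]; ring

lemma integral_mul_log_div_le {α : Type*} [MeasurableSpace α] {μ : Measure α} {p q : α → ℝ}
    {M : ℝ} (hp : Integrable p μ) (hq : Integrable q μ) (hpq : ∫ x, p x ∂μ = ∫ x, q x ∂μ)
    (hp₀ : ∀ᵐ x ∂μ, 0 ≤ p x) (hq₀ : ∀ᵐ x ∂μ, 0 ≤ q x)
    (hkl : Integrable (fun x => p x * log (p x / q x)) μ)
    (hh : Integrable (fun x => (√(p x) - √(q x)) ^ 2) μ)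
    (hpqM : ∀ᵐ x ∂μ, p x / q x ≤ M) (hM : 1 ≤ M) :
    ∫ x, p x * log (p x / q x) ∂μ ≤ (3 + log M) * ∫ x, (√(p x) - √(q x)) ^ 2 ∂μ := by
  have hpointwise : ∀ᵐ x ∂μ,
      p x * log (p x / q x) - p x + q x ≤ (3 + log M) * (√(p x) - √(q x)) ^ 2 := by
    filter_upwards [hp₀, hq₀, hpqM] with x hpx hqx hx
    exact mul_log_div_sub_add_le hpx hqx hx hM
  have hsub : Integrable (fun x => p x * log (p x / q x) - p x) μ := hkl.sub hp
  have hmono : ∫ x, (p x * log (p x / q x) - p x + q x) ∂μ ≤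
      ∫ x, (3 + log M) * (√(p x) - √(q x)) ^ 2 ∂μ :=
    integral_mono_ae (hsub.add hq) (hh.const_mul _) hpointwise
  rwa [integral_add hsub hq, integral_sub hkl hp, integral_const_mul, hpq,
    sub_add_cancel] at hmono

lemma ae_le_essSup_of_essSup_ne_zero {α : Type*} [MeasurableSpace α] {μ : Measure α}
    {f : α → ℝ} (hf : essSup f μ ≠ 0) : ∀ᵐ x ∂μ, f x ≤ essSup f μ := by
  refine ae_le_essSup ?_
  -- an `f` that is not essentially bounded above has the junk value `essSup f μ = sInf ∅ = 0`
  by_contra hunbdd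
  have hempty : {a : ℝ | ∀ᶠ x in ae μ, f x ≤ a} = ∅ :=
    Set.eq_empty_of_forall_notMem fun a ha => hunbdd ⟨a, ha⟩
  exact hf (by rw [essSup, Filter.limsup_eq, hempty, Real.sInf_empty])

/-- For every pair of probability densities `p, q` (w.r.t. a common σ-finite measure `μ`) with
`‖p/q‖_∞` finite, the Kullback–Leibler divergence satisfies
`∫ p log(p/q) ≲ h²(p,q) (1 + log ‖p/q‖_∞)` with a universal constant. -/
theorem kl_le_hellinger_sq : ∃ C > (0 : ℝ),
    ∀ (α : Type) (_ : MeasurableSpace α) (μ : Measure α), SigmaFinite μ →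
    ∀ (p q : α → ℝ), Measurable p → Measurable q →
    (∀ x, 0 ≤ p x) → (∀ x, 0 ≤ q x) →
    (∫ x, p x ∂μ = 1) → (∫ x, q x ∂μ = 1) →
    Integrable (fun x => (Real.sqrt (p x) - Real.sqrt (q x)) ^ 2) μ →
    Integrable (fun x => p x * Real.log (p x / q x)) μ →
    ∀ M : ℝ, 1 ≤ M → essSup (fun x => p x / q x) μ = M →
    ∫ x, p x * Real.log (p x / q x) ∂μ ≤
      C * (∫ x, (Real.sqrt (p x) - Real.sqrt (q x)) ^ 2 ∂μ) * (1 + Real.log M) := by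
  refine ⟨3, by norm_num, ?_⟩
  intro α _ μ _ p q _ _ hp₀ hq₀ hp₁ hq₁ hh hkl M hM hess
  have hpqM : ∀ᵐ x ∂μ, p x / q x ≤ M :=
    hess ▸ ae_le_essSup_of_essSup_ne_zero (by linarith)
  have hbound := integral_mul_log_div_le (integrable_of_integral_eq_one hp₁)
    (integrable_of_integral_eq_one hq₁) (hp₁.trans hq₁.symm) (.of_forall hp₀) (.of_forall hq₀)
    hkl hh hpqM hM
  have hh₀ : 0 ≤ ∫ x, (√(p x) - √(q x)) ^ 2 ∂μ := integral_nonneg fun x => sq_nonneg _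
  nlinarith [log_nonneg hM]
end

section
/- For every pair of probability densities p and q, ∫ p (log(p/q))² ≲ h²(p,q)·(1 + log‖p/q‖_∞)². -/
/-!
Pointwise, with `s = √(p/q)`, one has `p log²(p/q) = 4 q (s log s)²` and `(√p - √q)² = q (s - 1)²`,
so it suffices that `|s log s| ≤ |s - 1| (1 + log M)` whenever `s² ≤ M`. This follows from
`s - 1 ≤ s log s = (s - 1) log s + log s ≤ (s - 1)(1 + log s)`. Integrating gives the theorem
with constant `4`.
-/

open MeasureTheory Real

lemma ae_le_essSup_of_ne_zero {α : Type*} {_ : MeasurableSpace α} {μ : Measure α} {f : α → ℝ}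
    (hf : essSup f μ ≠ 0) : ∀ᵐ x ∂μ, f x ≤ essSup f μ := by
  refine ae_le_essSup ?_
  by_contra hunbdd
  refine hf ?_
  rw [essSup, Filter.limsup, Filter.limsSup]
  have hempty : {a : ℝ | ∀ᶠ y in Filter.map f (ae μ), y ≤ a} = ∅ :=
    Set.eq_empty_of_forall_notMem fun a ha ↦ hunbdd ⟨a, ha⟩
  rw [hempty, Real.sInf_empty]

namespace Real

lemma abs_mul_log_le_abs_sub_one_mul {s L : ℝ} (hs : 0 < s) (hL : 0 ≤ L) (hsL : log s ≤ L) :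
    |s * log s| ≤ |s - 1| * (1 + L) := by
  have hlower : s - 1 ≤ s * log s := by
    have := mul_le_mul_of_nonneg_left (one_sub_inv_le_log_of_pos hs) hs.le
    rwa [mul_sub, mul_one, mul_inv_cancel₀ hs.ne'] at this
  have hupper : s * log s ≤ (s - 1) * (1 + log s) := by nlinarith [log_le_sub_one_of_pos hs]
  rw [abs_le]
  constructor
  · nlinarith [neg_abs_le (s - 1), abs_nonneg (s - 1)]
  rcases le_or_gt s 1 with hs1 | hs1
  · have : s * log s ≤ 0 := mul_nonpos_of_nonneg_of_nonpos hs.le (log_nonpos hs.le hs1)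
    exact this.trans (by positivity)
  · calc s * log s ≤ (s - 1) * (1 + L) := hupper.trans (by gcongr)
      _ ≤ |s - 1| * (1 + L) := by gcongr; exact le_abs_self _

lemma mul_log_div_sq_le_mul_sqrt_sub_sqrt_sq {a b M : ℝ} (ha : 0 ≤ a) (hb : 0 ≤ b) (hM : 1 ≤ M)
    (habM : a / b ≤ M) :
    a * log (a / b) ^ 2 ≤ 4 * (1 + log M) ^ 2 * (√a - √b) ^ 2 := by
  have hlogM : 0 ≤ log M := log_nonneg hM
  rcases ha.eq_or_lt with rfl | ha
  · simp only [zero_mul]; positivity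
  rcases hb.eq_or_lt with rfl | hb
  · simp only [div_zero, log_zero, zero_pow two_ne_zero, mul_zero]; positivity
  set s := √a / √b with hs_def
  have hs : 0 < s := by positivity
  have hsq : s ^ 2 = a / b := by rw [div_pow, sq_sqrt ha.le, sq_sqrt hb.le]
  have hlog : log (a / b) = 2 * log s := by rw [← hsq, log_pow]; push_cast; ring
  have hsL : log s ≤ log M := by
    have := log_le_log (by positivity) habM
    linarith
  have hbound := pow_le_pow_left₀ (abs_nonneg _) (abs_mul_log_le_abs_sub_one_mul hs hlogM hsL) 2
  simp only [sq_abs, mul_pow] at hbound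
  have ha_eq : a = b * s ^ 2 := by rw [hsq]; field_simp
  have hsqrt : √a = √b * s := by rw [hs_def]; field_simp
  calc a * log (a / b) ^ 2 = 4 * b * (s ^ 2 * log s ^ 2) := by rw [hlog, ha_eq]; ring
    _ ≤ 4 * b * ((s - 1) ^ 2 * (1 + log M) ^ 2) := by gcongr
    _ = 4 * (1 + log M) ^ 2 * (√b ^ 2 * (s - 1) ^ 2) := by rw [sq_sqrt hb.le]; ring
    _ = 4 * (1 + log M) ^ 2 * (√a - √b) ^ 2 := by rw [hsqrt]; ring

end Real

/-- For every pair of probability densities `p, q` (w.r.t. a common σ-finite measure `μ`) with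
`‖p/q‖_∞` finite, `∫ p (log(p/q))² ≲ h²(p,q) (1 + log ‖p/q‖_∞)²` with a universal constant. -/
theorem kl_var_le_hellinger_sq : ∃ C > (0 : ℝ),
    ∀ (α : Type) (_ : MeasurableSpace α) (μ : Measure α), SigmaFinite μ →
    ∀ (p q : α → ℝ), Measurable p → Measurable q →
    (∀ x, 0 ≤ p x) → (∀ x, 0 ≤ q x) →
    (∫ x, p x ∂μ = 1) → (∫ x, q x ∂μ = 1) →
    Integrable (fun x => (Real.sqrt (p x) - Real.sqrt (q x)) ^ 2) μ →
    Integrable (fun x => p x * (Real.log (p x / q x)) ^ 2) μ →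
    ∀ M : ℝ, 1 ≤ M → essSup (fun x => p x / q x) μ = M →
    ∫ x, p x * (Real.log (p x / q x)) ^ 2 ∂μ ≤
      C * (∫ x, (Real.sqrt (p x) - Real.sqrt (q x)) ^ 2 ∂μ) * (1 + Real.log M) ^ 2 := by
  refine ⟨4, by norm_num, ?_⟩
  intro α _ μ _ p q _ _ hp hq _ _ hH hKL M hM hess
  have hratio : ∀ᵐ x ∂μ, p x / q x ≤ M :=
    hess ▸ ae_le_essSup_of_ne_zero (by linarith)
  calc ∫ x, p x * log (p x / q x) ^ 2 ∂μ
      ≤ ∫ x, 4 * (1 + log M) ^ 2 * (√(p x) - √(q x)) ^ 2 ∂μ :=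
        integral_mono_ae hKL (hH.const_mul _) <| hratio.mono fun x hx ↦
          mul_log_div_sq_le_mul_sqrt_sub_sqrt_sq (hp x) (hq x) hM hx
    _ = 4 * (∫ x, (√(p x) - √(q x)) ^ 2 ∂μ) * (1 + log M) ^ 2 := by
        rw [integral_const_mul]; ring
end

section
/- For a probability density p₀ on ℝ^d that is twice continuously differentiable with finite integrals ∫(‖∇p₀‖/p₀)⁴p₀ dλ and ∫(‖∇²p₀‖₂/p₀)²p₀ dλ, the smoothed density p_σ(x) = ∫p₀(x-σy)φ(y)dy satisfies ∫ (ṗ_σ(x))⁴ / p_σ(x)³ dx ≤ ∫(‖∇p₀‖/p₀)⁴ p₀ dλ · ∫‖y‖⁴φ(y)dy, where ṗ_σ(x) = -∫ y·∇p₀(x-σy) φ(y)dy is the derivative of p_σ with respect to σ. -/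
/-!
Hölder's inequality with exponents `4` and `4/3`, applied to the splitting
`‖y‖ ‖∇p₀‖ φ = (‖y‖ ‖∇p₀‖ p₀^{-3/4} φ^{1/4}) · (p₀^{3/4} φ^{3/4})` of the integrand of `ṗ_σ(x)`,
gives the pointwise bound `ṗ_σ(x)⁴ / p_σ(x)³ ≤ ∫ ‖y‖⁴ (‖∇p₀‖/p₀)⁴ p₀ (x - σy) φ(y) dy`.
The splitting is legitimate because `∇p₀` vanishes wherever the nonnegative `p₀` does.
Integrating in `x`, Tonelli and the translation invariance of Lebesgue measure separate the
right-hand side into the product of the two integrals.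
-/

open MeasureTheory Real
open scoped RealInnerProductSpace ENNReal

noncomputable def stdGauss (d : ℕ) (y : EuclideanSpace ℝ (Fin d)) : ℝ :=
  (2 * π) ^ (-(d : ℝ) / 2) * Real.exp (-‖y‖ ^ 2 / 2)

namespace ENNReal

variable {α : Type*} [MeasurableSpace α] {μ : Measure α}

theorem ofReal_abs_rpow_div_ofReal_rpow {p : ℝ} (hp : 1 < p) {x y : ℝ} (hy : 0 ≤ y)
    (hxy : y = 0 → x = 0) :
    ENNReal.ofReal |x| ^ p / ENNReal.ofReal y ^ (p - 1) =
      ENNReal.ofReal (|x| ^ p / y ^ (p - 1)) := by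
  rcases hy.eq_or_lt with rfl | hy
  · simp [hxy rfl, zero_rpow_of_pos (by linarith : 0 < p),
      Real.zero_rpow (by linarith : p - 1 ≠ 0)]
  · rw [ofReal_div_of_pos (by positivity),
      ofReal_rpow_of_nonneg (abs_nonneg x) (by linarith),
      ofReal_rpow_of_nonneg hy.le (by linarith)]

theorem lintegral_rpow_le_lintegral_rpow_div_mul {p : ℝ} (hp : 1 < p) {f h : α → ℝ≥0∞}
    (hf : AEMeasurable f μ) (hh : AEMeasurable h μ) (hfh : ∀ a, h a = 0 → f a = 0)
    (hh_top : ∀ a, h a ≠ ∞) :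
    (∫⁻ a, f a ∂μ) ^ p ≤ (∫⁻ a, f a ^ p / h a ^ (p - 1) ∂μ) * (∫⁻ a, h a ∂μ) ^ (p - 1) := by
  set q := p.conjExponent
  have hpq : p.HolderConjugate q := .conjExponent hp
  have hp0 : 0 ≤ p := by linarith
  have hsplit : ∀ a, f a = (f a / h a ^ (1 / q)) * h a ^ (1 / q) := fun a => by
    rcases eq_or_ne (h a) 0 with h0 | h0
    · simp [hfh a h0, h0]
    · exact (ENNReal.div_mul_cancel (by simp [h0, hpq.symm.nonneg])
        (by simp [hh_top a, hpq.symm.nonneg])).symm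
  have holder := lintegral_mul_le_Lp_mul_Lq μ hpq (f := fun a => f a / h a ^ (1 / q))
    (g := fun a => h a ^ (1 / q)) (hf.div (hh.pow_const (1 / q))) (hh.pow_const (1 / q))
  have hq : (1 / q) * q = 1 := one_div_mul_cancel hpq.symm.ne_zero
  have hpq' : p / q = p - 1 := hpq.div_conj_eq_sub_one
  have hfactor_rpow : ∀ a, (f a / h a ^ (1 / q)) ^ p = f a ^ p / h a ^ (p - 1) := fun a => by
    rw [div_rpow_of_nonneg _ _ hp0, ← rpow_mul, ← hpq', one_div_mul_eq_div]
  simp only [Pi.mul_apply, ← hsplit, hfactor_rpow, ← rpow_mul, hq, rpow_one] at holder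
  calc (∫⁻ a, f a ∂μ) ^ p
      ≤ ((∫⁻ a, f a ^ p / h a ^ (p - 1) ∂μ) ^ (1 / p) * (∫⁻ a, h a ∂μ) ^ (1 / q)) ^ p :=
        rpow_le_rpow holder hp0
    _ = (∫⁻ a, f a ^ p / h a ^ (p - 1) ∂μ) * (∫⁻ a, h a ∂μ) ^ (p - 1) := by
        rw [mul_rpow_of_nonneg _ _ hp0, ← rpow_mul, ← rpow_mul, one_div_mul_cancel hpq.ne_zero,
          rpow_one, one_div_mul_eq_div, hpq']

end ENNReal

section

variable {α : Type*} [MeasurableSpace α] {μ : Measure α}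

theorem ofReal_abs_integral_rpow_div_le_lintegral {p : ℝ} (hp : 1 < p) {f h : α → ℝ}
    (hf : AEMeasurable f μ) (hh : AEMeasurable h μ) (h_nonneg : ∀ a, 0 ≤ h a)
    (hfh : ∀ a, h a = 0 → f a = 0) :
    ENNReal.ofReal (|∫ a, f a ∂μ| ^ p / (∫ a, h a ∂μ) ^ (p - 1)) ≤
      ∫⁻ a, ENNReal.ofReal (|f a| ^ p / h a ^ (p - 1)) ∂μ := by
  rcases (integral_nonneg (μ := μ) (f := h) h_nonneg).eq_or_lt with hI | hI
  · rw [← hI, Real.zero_rpow (by linarith), div_zero, ENNReal.ofReal_zero]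
    exact zero_le
  have hint : Integrable h μ := by
    by_contra H
    rw [integral_undef H] at hI
    exact lt_irrefl _ hI
  have hH : ENNReal.ofReal (∫ a, h a ∂μ) = ∫⁻ a, ENNReal.ofReal (h a) ∂μ :=
    ofReal_integral_eq_lintegral_ofReal hint (ae_of_all _ h_nonneg)
  have hF : ENNReal.ofReal |∫ a, f a ∂μ| ≤ ∫⁻ a, ENNReal.ofReal |f a| ∂μ := by
    simpa only [enorm_eq_ofReal_abs] using enorm_integral_le_lintegral_enorm f
  have holder := ENNReal.lintegral_rpow_le_lintegral_rpow_div_mul hp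
    hf.abs.ennreal_ofReal hh.ennreal_ofReal
    (fun a ha => by simp [hfh a (le_antisymm (ENNReal.ofReal_eq_zero.1 ha) (h_nonneg a))])
    (fun _ => ENNReal.ofReal_ne_top)
  calc ENNReal.ofReal (|∫ a, f a ∂μ| ^ p / (∫ a, h a ∂μ) ^ (p - 1))
      = ENNReal.ofReal |∫ a, f a ∂μ| ^ p / ENNReal.ofReal (∫ a, h a ∂μ) ^ (p - 1) :=
        (ENNReal.ofReal_abs_rpow_div_ofReal_rpow hp hI.le (fun h0 => absurd h0 hI.ne')).symm
    _ ≤ (∫⁻ a, ENNReal.ofReal |f a| ∂μ) ^ p / (∫⁻ a, ENNReal.ofReal (h a) ∂μ) ^ (p - 1) := by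
        rw [hH]
        gcongr
    _ ≤ ∫⁻ a, ENNReal.ofReal |f a| ^ p / ENNReal.ofReal (h a) ^ (p - 1) ∂μ :=
        ENNReal.div_le_of_le_mul holder
    _ = ∫⁻ a, ENNReal.ofReal (|f a| ^ p / h a ^ (p - 1)) ∂μ :=
        lintegral_congr fun a => ENNReal.ofReal_abs_rpow_div_ofReal_rpow hp (h_nonneg a) (hfh a)

theorem integral_le_of_lintegral_ofReal_le {f : α → ℝ} (hf : 0 ≤ f) {C : ℝ} (hC : 0 ≤ C)
    (h : ∫⁻ a, ENNReal.ofReal (f a) ∂μ ≤ ENNReal.ofReal C) : ∫ a, f a ∂μ ≤ C := by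
  rw [← ENNReal.ofReal_le_ofReal_iff hC]
  calc ENNReal.ofReal (∫ a, f a ∂μ) ≤ ‖∫ a, f a ∂μ‖ₑ := ofReal_le_enorm _
    _ ≤ ∫⁻ a, ‖f a‖ₑ ∂μ := enorm_integral_le_lintegral_enorm f
    _ = ∫⁻ a, ENNReal.ofReal (f a) ∂μ := lintegral_congr fun a => Real.enorm_of_nonneg (hf a)
    _ ≤ ENNReal.ofReal C := h

end

theorem lintegral_lintegral_mul_comp_sub {G Y : Type*} [AddGroup G] [MeasurableSpace G]
    [MeasurableAdd G] [MeasurableSub₂ G] [MeasurableSpace Y] {μ : Measure G} [SFinite μ]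
    [μ.IsAddRightInvariant] {ν : Measure Y} [SFinite ν] {w : Y → ℝ≥0∞} {F : G → ℝ≥0∞}
    {s : Y → G} (hw : Measurable w) (hF : Measurable F) (hs : Measurable s) :
    ∫⁻ x, ∫⁻ y, w y * F (x - s y) ∂ν ∂μ = (∫⁻ y, w y ∂ν) * ∫⁻ x, F x ∂μ := by
  have hm : Measurable (Function.uncurry fun x y => w y * F (x - s y)) :=
    (hw.comp measurable_snd).mul (hF.comp (measurable_fst.sub (hs.comp measurable_snd)))
  rw [lintegral_lintegral_swap hm.aemeasurable, ← lintegral_mul_const _ hw]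
  refine lintegral_congr fun y => ?_
  rw [lintegral_const_mul _ (by exact hF.comp (measurable_sub_const (s y))),
    lintegral_sub_right_eq_self]

theorem integrable_exp_neg_mul_sq_norm {V : Type*} [NormedAddCommGroup V] [InnerProductSpace ℝ V]
    [FiniteDimensional ℝ V] [MeasurableSpace V] [BorelSpace V] {b : ℝ} (hb : 0 < b) :
    Integrable fun v : V => Real.exp (-b * ‖v‖ ^ 2) := by
  have h := (GaussianFourier.integrable_cexp_neg_mul_sq_norm_add
    (V := V) (b := (b : ℂ)) (by simpa using hb) 0 0).norm
  refine h.congr (ae_of_all _ fun v => ?_)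
  simp only [zero_mul, add_zero, Complex.norm_exp]
  norm_cast

theorem gradient_eq_zero_of_nonneg_of_eq_zero {E : Type*} [NormedAddCommGroup E]
    [InnerProductSpace ℝ E] [CompleteSpace E] {f : E → ℝ} (hf : ∀ x, 0 ≤ f x) {z : E}
    (hz : f z = 0) : gradient f z = 0 := by
  have hmin : IsLocalMin f z := .of_forall fun x => hz ▸ hf x
  simp [gradient, hmin.fderiv_eq_zero]

theorem abs_inner_mul_pow_four_div_le {E : Type*} [NormedAddCommGroup E] [InnerProductSpace ℝ E]
    (y v : E) {w p : ℝ} (hw : 0 ≤ w) (hp : 0 ≤ p) :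
    |⟪y, v⟫ * w| ^ 4 / (p * w) ^ 3 ≤ ‖y‖ ^ 4 * w * ((‖v‖ / p) ^ 4 * p) := by
  rcases hw.eq_or_lt with rfl | hw
  · simp
  rcases hp.eq_or_lt with rfl | hp
  · simp
  have hinner : |⟪y, v⟫| ^ 4 ≤ (‖y‖ * ‖v‖) ^ 4 :=
    pow_le_pow_left₀ (abs_nonneg _) (abs_real_inner_le_norm y v) 4
  calc |⟪y, v⟫ * w| ^ 4 / (p * w) ^ 3 = |⟪y, v⟫| ^ 4 * w / p ^ 3 := by
        rw [abs_mul, abs_of_pos hw]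
        field_simp
    _ ≤ (‖y‖ * ‖v‖) ^ 4 * w / p ^ 3 := by gcongr
    _ = ‖y‖ ^ 4 * w * ((‖v‖ / p) ^ 4 * p) := by field_simp

section stdGauss

variable {d : ℕ}

theorem stdGauss_nonneg (y : EuclideanSpace ℝ (Fin d)) : 0 ≤ stdGauss d y := by
  unfold stdGauss
  positivity

@[fun_prop]
theorem continuous_stdGauss : Continuous (stdGauss d) := by
  unfold stdGauss
  fun_prop

theorem norm_pow_four_mul_stdGauss_le (y : EuclideanSpace ℝ (Fin d)) :
    ‖y‖ ^ 4 * stdGauss d y ≤ 32 * (2 * π) ^ (-(d : ℝ) / 2) * Real.exp (-(1 / 4) * ‖y‖ ^ 2) := by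
  have hexp : (‖y‖ ^ 2 / 4) ^ 2 / 2 ≤ Real.exp (‖y‖ ^ 2 / 4) := by
    simpa using Real.pow_div_factorial_le_exp _ (by positivity : 0 ≤ ‖y‖ ^ 2 / 4) 2
  have hsplit : Real.exp (-‖y‖ ^ 2 / 2) =
      Real.exp (-(1 / 4) * ‖y‖ ^ 2) / Real.exp (‖y‖ ^ 2 / 4) := by
    rw [← Real.exp_sub]
    ring_nf
  have hpoly : ‖y‖ ^ 4 / Real.exp (‖y‖ ^ 2 / 4) ≤ 32 := by
    rw [div_le_iff₀ (Real.exp_pos _)]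
    linarith [show ‖y‖ ^ 4 = 32 * ((‖y‖ ^ 2 / 4) ^ 2 / 2) by ring]
  unfold stdGauss
  calc ‖y‖ ^ 4 * ((2 * π) ^ (-(d : ℝ) / 2) * Real.exp (-‖y‖ ^ 2 / 2))
      = (2 * π) ^ (-(d : ℝ) / 2) * Real.exp (-(1 / 4) * ‖y‖ ^ 2) *
          (‖y‖ ^ 4 / Real.exp (‖y‖ ^ 2 / 4)) := by
        rw [hsplit]
        ring
    _ ≤ (2 * π) ^ (-(d : ℝ) / 2) * Real.exp (-(1 / 4) * ‖y‖ ^ 2) * 32 := by gcongr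
    _ = 32 * (2 * π) ^ (-(d : ℝ) / 2) * Real.exp (-(1 / 4) * ‖y‖ ^ 2) := by ring

theorem integrable_norm_pow_four_mul_stdGauss :
    Integrable fun y : EuclideanSpace ℝ (Fin d) => ‖y‖ ^ 4 * stdGauss d y := by
  refine ((integrable_exp_neg_mul_sq_norm (by norm_num : (0 : ℝ) < 1 / 4)).const_mul
    (32 * (2 * π) ^ (-(d : ℝ) / 2))).mono' (by fun_prop) (ae_of_all _ fun y => ?_)
  rw [Real.norm_of_nonneg (mul_nonneg (by positivity) (stdGauss_nonneg y))]
  exact norm_pow_four_mul_stdGauss_le y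

end stdGauss

section Smoothing

variable {E : Type*} [NormedAddCommGroup E] [InnerProductSpace ℝ E] [CompleteSpace E]
  [MeasurableSpace E] [BorelSpace E]

theorem measurable_gradient (f : E → ℝ) : Measurable (gradient f) :=
  (InnerProductSpace.toDual ℝ E).symm.continuous.measurable.comp (measurable_fderiv ℝ f)

theorem ofReal_smoothed_derivative_pow_four_div_le [SecondCountableTopology E] {μ : Measure E}
    {p₀ w : E → ℝ} (hp₀ : Measurable p₀) (hp₀_nonneg : ∀ x, 0 ≤ p₀ x) (hw : Measurable w)
    (hw_nonneg : ∀ y, 0 ≤ w y) (σ : ℝ) (x : E) :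
    ENNReal.ofReal ((-∫ y, ⟪y, gradient p₀ (x - σ • y)⟫ * w y ∂μ) ^ 4 /
      (∫ y, p₀ (x - σ • y) * w y ∂μ) ^ 3) ≤
      ∫⁻ y, ENNReal.ofReal (‖y‖ ^ 4 * w y) * ENNReal.ofReal
        ((‖gradient p₀ (x - σ • y)‖ / p₀ (x - σ • y)) ^ 4 * p₀ (x - σ • y)) ∂μ := by
  have hg := measurable_gradient p₀
  have holder := ofReal_abs_integral_rpow_div_le_lintegral (μ := μ) (p := 4) (by norm_num)
    (f := fun y => ⟪y, gradient p₀ (x - σ • y)⟫ * w y)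
    (h := fun y => p₀ (x - σ • y) * w y) (by fun_prop) (by fun_prop)
    (fun y => mul_nonneg (hp₀_nonneg _) (hw_nonneg y))
    (fun y hy => by
      rcases mul_eq_zero.1 hy with hp₀_zero | hw_zero
      · simp [gradient_eq_zero_of_nonneg_of_eq_zero hp₀_nonneg hp₀_zero]
      · simp [hw_zero])
  simp only [show (4 : ℝ) - 1 = 3 by norm_num, Real.rpow_ofNat] at holder
  rw [← Even.pow_abs ⟨2, rfl⟩, abs_neg]
  refine holder.trans (lintegral_mono fun y => ?_)
  rw [← ENNReal.ofReal_mul (mul_nonneg (by positivity) (hw_nonneg y))]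
  exact ENNReal.ofReal_le_ofReal
    (abs_inner_mul_pow_four_div_le _ _ (hw_nonneg y) (hp₀_nonneg _))

end Smoothing

theorem smoothed_derivative_fourth_moment_bound_general (d : ℕ)
    (p₀ : EuclideanSpace ℝ (Fin d) → ℝ)
    (hsmooth : ContDiff ℝ 2 p₀)
    (hp0 : ∀ x, 0 ≤ p₀ x)
    (hmom1 : Integrable (fun x => (‖gradient p₀ x‖ / p₀ x) ^ 4 * p₀ x))
    (σ : ℝ) :
    ∫ x, (-∫ y, ⟪y, gradient p₀ (x - σ • y)⟫ * stdGauss d y) ^ 4 /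
        (∫ y, p₀ (x - σ • y) * stdGauss d y) ^ 3 ≤
      (∫ x, (‖gradient p₀ x‖ / p₀ x) ^ 4 * p₀ x) * ∫ y, ‖y‖ ^ 4 * stdGauss d y := by
  set Q := fun x => (‖gradient p₀ x‖ / p₀ x) ^ 4 * p₀ x
  have hp₀ : Measurable p₀ := hsmooth.continuous.measurable
  have hQ : Measurable Q := by have := measurable_gradient p₀; fun_prop
  have hQ_nonneg : ∀ x, 0 ≤ Q x := fun x => mul_nonneg (by positivity) (hp0 x)
  have hmoment_nonneg : ∀ y : EuclideanSpace ℝ (Fin d), 0 ≤ ‖y‖ ^ 4 * stdGauss d y :=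
    fun y => mul_nonneg (by positivity) (stdGauss_nonneg y)
  refine integral_le_of_lintegral_ofReal_le (fun x => div_nonneg (by positivity)
    (pow_nonneg (integral_nonneg fun y => mul_nonneg (hp0 _) (stdGauss_nonneg y)) 3))
    (mul_nonneg (integral_nonneg hQ_nonneg) (integral_nonneg hmoment_nonneg)) ?_
  calc _ ≤ _ := lintegral_mono (ofReal_smoothed_derivative_pow_four_div_le hp₀ hp0
        continuous_stdGauss.measurable stdGauss_nonneg σ)
    _ = (∫⁻ y, ENNReal.ofReal (‖y‖ ^ 4 * stdGauss d y)) * ∫⁻ x, ENNReal.ofReal (Q x) :=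
        lintegral_lintegral_mul_comp_sub (by fun_prop) hQ.ennreal_ofReal (by fun_prop)
    _ = ENNReal.ofReal ((∫ x, Q x) * ∫ y, ‖y‖ ^ 4 * stdGauss d y) := by
        rw [← ofReal_integral_eq_lintegral_ofReal hmom1 (ae_of_all _ hQ_nonneg),
          ← ofReal_integral_eq_lintegral_ofReal integrable_norm_pow_four_mul_stdGauss
            (ae_of_all _ hmoment_nonneg),
          ← ENNReal.ofReal_mul (integral_nonneg hmoment_nonneg), mul_comm]

/-- For a twice continuously differentiable probability density `p₀` on `ℝ^d` with the stated
finite moment integrals, the smoothed density `p_σ(x) = ∫ p₀(x - σ y) φ(y) dy` and its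
`σ`-derivative `ṗ_σ(x) = -∫ ⟪y, ∇p₀(x - σ y)⟫ φ(y) dy` satisfy
`∫ ṗ_σ⁴ / p_σ³ ≤ ∫ (‖∇p₀‖/p₀)⁴ p₀ ⬝ ∫ ‖y‖⁴ φ(y) dy`. -/
theorem smoothed_derivative_fourth_moment_bound (d : ℕ)
    (p₀ : EuclideanSpace ℝ (Fin d) → ℝ)
    (hsmooth : ContDiff ℝ 2 p₀)
    (hp0 : ∀ x, 0 ≤ p₀ x) (hp1 : ∫ x, p₀ x = 1)
    (hmom1 : Integrable (fun x => (‖gradient p₀ x‖ / p₀ x) ^ 4 * p₀ x))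
    (hmom2 : Integrable (fun x => (‖fderiv ℝ (fderiv ℝ p₀) x‖ / p₀ x) ^ 2 * p₀ x))
    (σ : ℝ) (hσ : 0 < σ) :
    ∫ x, (-∫ y, ⟪y, gradient p₀ (x - σ • y)⟫ * stdGauss d y) ^ 4 /
        (∫ y, p₀ (x - σ • y) * stdGauss d y) ^ 3 ≤
      (∫ x, (‖gradient p₀ x‖ / p₀ x) ^ 4 * p₀ x) * ∫ y, ‖y‖ ^ 4 * stdGauss d y :=
  smoothed_derivative_fourth_moment_bound_general d p₀ hsmooth hp0 hmom1 σ
end
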